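/- arXiv:math/0508620 — 9 statements merged into one kernel-verified Lean document; each statement's English description precedes it below -/
import Mathlib

section
/- For ψ ∈ [0, 2π/3], the quantity c² defined by c² = (1 + cos ψ)/(2·cos(ψ/4) − cos ψ + 1) satisfies 0 < c² ≤ 1, with c² = 1 exactly when ψ = 0. -/
/-- For ψ ∈ [0, 2π/3], c² = (1 + cos ψ)/(2·cos(ψ/4) − cos ψ + 1) satisfies
0 < c² ≤ 1, with c² = 1 exactly when ψ = 0. -/
theorem stmt0 (ψ : ℝ) (hψ : ψ ∈ Set.Icc 0 (2 * Real.pi / 3)) :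
    0 < (1 + Real.cos ψ) / (2 * Real.cos (ψ / 4) - Real.cos ψ + 1) ∧
    (1 + Real.cos ψ) / (2 * Real.cos (ψ / 4) - Real.cos ψ + 1) ≤ 1 ∧
    ((1 + Real.cos ψ) / (2 * Real.cos (ψ / 4) - Real.cos ψ + 1) = 1 ↔ ψ = 0) := by
  obtain ⟨h0, h1⟩ := hψ
  have hpi := Real.pi_pos
  have hψπ : ψ ≤ Real.pi := by nlinarith
  have hc23 : Real.cos (2 * Real.pi / 3) = -(1/2) := by
    rw [show (2 * Real.pi / 3) = Real.pi - Real.pi / 3 by ring, Real.cos_pi_sub,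
      Real.cos_pi_div_three]
  have hcψ : -(1/2) ≤ Real.cos ψ := by
    have := Real.cos_le_cos_of_nonneg_of_le_pi h0 (by nlinarith) h1
    linarith [this, hc23.ge]
  have hkey : Real.cos ψ ≤ Real.cos (ψ / 4) :=
    Real.cos_le_cos_of_nonneg_of_le_pi (by linarith) hψπ (by linarith)
  have hN : 0 < 1 + Real.cos ψ := by linarith
  have hD : 0 < 2 * Real.cos (ψ / 4) - Real.cos ψ + 1 := by linarith
  refine ⟨div_pos hN hD, (div_le_one hD).mpr (by linarith), ?_⟩
  rw [div_eq_one_iff_eq hD.ne']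
  constructor
  · intro h
    by_contra hne
    have hψpos : 0 < ψ := lt_of_le_of_ne h0 (Ne.symm hne)
    have := Real.cos_lt_cos_of_nonneg_of_le_pi (by linarith : 0 ≤ ψ/4) hψπ
      (by linarith : ψ/4 < ψ)
    linarith
  · intro h; subst h; norm_num
end

section
/- Let ω = 4·arccos((2/√3)·cos((1/3)·arccos(−3√3/8))). Then ω is the smallest positive real number ψ such that 2·cos(ψ/4) + cos ψ − 1 = 0. -/
open Real

set_option maxHeartbeats 1000000 in
/-- ω = 4·arccos((2/√3)·cos((1/3)·arccos(−3√3/8))) is the smallest positive real ψ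
with 2·cos(ψ/4) + cos ψ − 1 = 0. -/
theorem stmt2 :
    IsLeast {ψ : ℝ | 0 < ψ ∧ 2 * Real.cos (ψ / 4) + Real.cos ψ - 1 = 0}
      (4 * Real.arccos ((2 / Real.sqrt 3) *
        Real.cos ((1 / 3) * Real.arccos (-3 * Real.sqrt 3 / 8)))) := by
  have hs3 : Real.sqrt 3 ^ 2 = 3 := Real.sq_sqrt (by norm_num)
  have hs3pos : (0:ℝ) < Real.sqrt 3 := Real.sqrt_pos.2 (by norm_num)
  have hs3lt2 : Real.sqrt 3 < 2 := by nlinarith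
  set a : ℝ := -3 * Real.sqrt 3 / 8 with ha
  have ha1 : -1 < a := by rw [ha]; nlinarith
  have ha2 : a < 0 := by rw [ha]; nlinarith
  have ha1' : a ≤ 1 := by linarith
  -- arccos a ∈ (π/2, π)
  have hA2 : π / 2 < Real.arccos a := by
    rw [Real.arccos_eq_pi_div_two_sub_arcsin]
    have : Real.arcsin a < 0 := Real.arcsin_lt_zero.2 ha2
    linarith
  have hA1 : Real.arccos a < π := by
    rw [Real.arccos_eq_pi_div_two_sub_arcsin]
    have : -(π/2) < Real.arcsin a := Real.neg_pi_div_two_lt_arcsin.2 ha1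
    linarith
  set θ : ℝ := (1/3) * Real.arccos a with hθ
  have hθ1 : π / 6 < θ := by rw [hθ]; linarith
  have hθ2 : θ < π / 3 := by rw [hθ]; linarith
  have hpi : (0:ℝ) < π := Real.pi_pos
  set c : ℝ := Real.cos θ with hc
  -- c ∈ (1/2, √3/2)
  have hc1 : 1/2 < c := by
    have := Real.cos_lt_cos_of_nonneg_of_le_pi (by linarith : (0:ℝ) ≤ θ)
      (by linarith : π/3 ≤ π) hθ2
    rwa [Real.cos_pi_div_three] at this
  have hc2 : c < Real.sqrt 3 / 2 := by
    have := Real.cos_lt_cos_of_nonneg_of_le_pi (by positivity : (0:ℝ) ≤ π/6)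
      (by linarith : θ ≤ π) hθ1
    rwa [Real.cos_pi_div_six] at this
  set t : ℝ := (2 / Real.sqrt 3) * c with ht
  have ht1 : t < 1 := by
    rw [ht, div_mul_eq_mul_div, div_lt_one hs3pos]; nlinarith
  have ht0 : 1 / Real.sqrt 3 < t := by
    rw [ht, div_mul_eq_mul_div, div_lt_div_iff₀ hs3pos hs3pos]; nlinarith
  have ht0' : (0:ℝ) < t := lt_trans (by positivity) ht0
  have ht3 : 1 < 3 * t ^ 2 := by
    have h : 1 < t * Real.sqrt 3 := by rwa [div_lt_iff₀ hs3pos] at ht0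
    nlinarith
  -- triple angle: cos (3θ) = a
  have h3θ : Real.cos (3 * θ) = a := by
    have : 3 * θ = Real.arccos a := by rw [hθ]; ring
    rw [this, Real.cos_arccos ha1.le ha1']
  have hcube : 4 * c ^ 3 - 3 * c = a := by
    rw [← h3θ, Real.cos_three_mul, hc]
  -- t is a root of 4x³ - 4x + 1
  have hroot : 4 * t ^ 3 - 4 * t + 1 = 0 := by
    have hca : 4 * c ^ 3 - 3 * c = -3 * Real.sqrt 3 / 8 := by rw [hcube, ha]
    rw [ht]
    have hca3 : (4 * c ^ 3 - 3 * c) * Real.sqrt 3 = -9/8 := by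
      rw [hca]; nlinarith [hs3]
    field_simp
    nlinarith [hca3, hs3, sq_nonneg (Real.sqrt 3 ^ 2 - 3)]
  -- cos of the candidate ω
  have htarc : Real.cos (Real.arccos t) = t :=
    Real.cos_arccos (by linarith) ht1.le
  have harcpos : 0 < Real.arccos t := Real.arccos_pos.2 ht1
  have harclt : Real.arccos t < π / 2 := Real.arccos_lt_pi_div_two.2 ht0'
  have hquad : ∀ x : ℝ, Real.cos (4 * x) = 8 * Real.cos x ^ 4 - 8 * Real.cos x ^ 2 + 1 := by
    intro x
    have h2 : Real.cos (2 * x) = 2 * Real.cos x ^ 2 - 1 := Real.cos_two_mul x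
    have h4 : Real.cos (4 * x) = 2 * Real.cos (2 * x) ^ 2 - 1 := by
      rw [show (4:ℝ) * x = 2 * (2 * x) by ring, Real.cos_two_mul]
    rw [h4, h2]; ring
  clear_value t c θ a
  constructor
  · refine ⟨by linarith, ?_⟩
    have h1 : (4 * Real.arccos t) / 4 = Real.arccos t := by ring
    rw [h1, htarc, hquad, htarc]
    nlinarith [hroot]
  · rintro ψ ⟨hψpos, heq⟩
    by_contra hcon
    push_neg at hcon
    set u : ℝ := Real.cos (ψ / 4) with hu
    have hψ4 : ψ / 4 < Real.arccos t := by linarith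
    have hut : t < u := by
      have := Real.cos_lt_cos_of_nonneg_of_le_pi (by linarith : (0:ℝ) ≤ ψ/4)
        (by linarith : Real.arccos t ≤ π) hψ4
      rwa [htarc] at this
    have hcψ : Real.cos ψ = 8 * u ^ 4 - 8 * u ^ 2 + 1 := by
      rw [hu, ← hquad (ψ/4), show (4:ℝ)*(ψ/4) = ψ from by ring]
    rw [hcψ] at heq
    -- 4u³-4u+1 = (4t³-4t+1) + 4(u-t)(u²+ut+t²-1) > 0
    have hkey : 0 < u ^ 2 + u * t + t ^ 2 - 1 := by nlinarith
    have hgu : 0 < 4 * u ^ 3 - 4 * u + 1 := by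
      nlinarith [mul_pos (sub_pos.2 hut) hkey]
    nlinarith [mul_pos ht0' hgu]
end

section
/- For ψ ∈ (0, 2π/3), the quantity R² = (1 + cos ψ)/(2·cos(ψ/4) + cos ψ − 1) is strictly positive and strictly greater than 1. -/
/-- For ψ ∈ (0, 2π/3), R² = (1 + cos ψ)/(2·cos(ψ/4) + cos ψ − 1) is strictly
positive and strictly greater than 1. -/
theorem stmt3 (ψ : ℝ) (hψ : ψ ∈ Set.Ioo 0 (2 * Real.pi / 3)) :
    0 < (1 + Real.cos ψ) / (2 * Real.cos (ψ / 4) + Real.cos ψ - 1) ∧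
    1 < (1 + Real.cos ψ) / (2 * Real.cos (ψ / 4) + Real.cos ψ - 1) := by
  obtain ⟨h0, h1⟩ := hψ
  have hπ : (0:ℝ) < Real.pi := Real.pi_pos
  -- cos ψ > cos (2π/3) = -1/2
  have hψπ : ψ < Real.pi := by nlinarith
  have hc1 : Real.cos ψ > Real.cos (2 * Real.pi / 3) := by
    apply Real.cos_lt_cos_of_nonneg_of_le_pi h0.le (by nlinarith) h1
  have hval : Real.cos (2 * Real.pi / 3) = -(1/2) := by
    have : 2 * Real.pi / 3 = Real.pi - Real.pi / 3 := by ring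
    rw [this, Real.cos_pi_sub, Real.cos_pi_div_three]
  rw [hval] at hc1
  -- cos (ψ/4) > cos (π/6) = √3/2
  have hc2 : Real.cos (ψ / 4) > Real.cos (Real.pi / 6) := by
    apply Real.cos_lt_cos_of_nonneg_of_le_pi (by positivity) (by nlinarith) (by nlinarith)
  rw [Real.cos_pi_div_six] at hc2
  have hs3 : Real.sqrt 3 ^ 2 = 3 := Real.sq_sqrt (by norm_num)
  have hs3' : (0:ℝ) ≤ Real.sqrt 3 := Real.sqrt_nonneg 3
  have hden : 0 < 2 * Real.cos (ψ / 4) + Real.cos ψ - 1 := by nlinarith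
  -- cos (ψ/4) < 1
  have hc3 : Real.cos (ψ / 4) < 1 := by
    have := Real.cos_lt_cos_of_nonneg_of_le_pi le_rfl (by nlinarith) (by positivity : (0:ℝ) < ψ / 4)
    simpa using this
  constructor
  · exact div_pos (by linarith) hden
  · rw [lt_div_iff₀ hden]
    nlinarith
end

section
/- With c² = (1 + cos ψ)/(2·cos(ψ/4) − cos ψ + 1) and R² = (1 + cos ψ)/(2·cos(ψ/4) + cos ψ − 1), the quantity 2 + c² − R² is strictly positive for ψ ∈ (0, 2π/3), equals 0 at ψ = 2π/3, and is strictly negative for ψ ∈ (2π/3, ω), where ω is the smallest positive root of 2·cos(ψ/4) + cos ψ − 1 = 0. -/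
/-!
Writing `v = cos (ψ/2)`, the double-angle formulas `cos ψ = 2v² - 1` and `2 cos² (ψ/4) = 1 + v`
collapse `⟨p,p⟩ = 2 + c² - R²` to `4 (1 + v) (2v - 1) / (D_c D_R)`, where `D_c`, `D_R` are the two
denominators. On `(0, ω)` both denominators are positive (`D_R` by the intermediate value theorem,
as `D_R 0 = 2` and `ω` is its first positive zero, and `ω ≤ 2π` since `D_R (2π) = 0`), so the sign
is that of `2 cos (ψ/2) - 1`, which changes exactly at `ψ/2 = π/3`.
-/

open Real

noncomputable def cDenom (ψ : ℝ) : ℝ := 2 * cos (ψ / 4) - cos ψ + 1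

noncomputable def rDenom (ψ : ℝ) : ℝ := 2 * cos (ψ / 4) + cos ψ - 1

noncomputable def poleInner (ψ : ℝ) : ℝ :=
  2 + (1 + cos ψ) / cDenom ψ - (1 + cos ψ) / rDenom ψ

lemma cos_eq_two_mul_cos_half_sq_sub_one (ψ : ℝ) : cos ψ = 2 * cos (ψ / 2) ^ 2 - 1 := by
  rw [← cos_two_mul, mul_div_cancel₀ _ two_ne_zero]

lemma cos_half_eq_two_mul_cos_quarter_sq_sub_one (ψ : ℝ) :
    cos (ψ / 2) = 2 * cos (ψ / 4) ^ 2 - 1 := by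
  rw [← cos_two_mul]; ring_nf

lemma poleInner_eq (ψ : ℝ) (hc : cDenom ψ ≠ 0) (hr : rDenom ψ ≠ 0) :
    poleInner ψ = 4 * (1 + cos (ψ / 2)) * (2 * cos (ψ / 2) - 1) / (cDenom ψ * rDenom ψ) := by
  have hv := cos_half_eq_two_mul_cos_quarter_sq_sub_one ψ
  rw [poleInner, eq_div_iff (mul_ne_zero hc hr)]
  field_simp
  simp only [cDenom, rDenom, cos_eq_two_mul_cos_half_sq_sub_one ψ, hv]
  ring

lemma cDenom_pos {ψ : ℝ} (h₀ : -(2 * π) < ψ) (h₁ : ψ < 2 * π) : 0 < cDenom ψ := by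
  have : 0 < cos (ψ / 4) := cos_pos_of_mem_Ioo ⟨by linarith, by linarith⟩
  have := cos_le_one ψ
  unfold cDenom; linarith

lemma rDenom_zero : rDenom 0 = 2 := by norm_num [rDenom]

lemma rDenom_two_pi : rDenom (2 * π) = 0 := by
  rw [rDenom, show 2 * π / 4 = π / 2 by ring, cos_pi_div_two, cos_two_pi]; ring

lemma rDenom_pos_of_le {ψ : ℝ} (h₀ : 0 ≤ ψ) (h₁ : ψ ≤ 2 * π / 3) : 0 < rDenom ψ := by
  have hv : 1 / 2 ≤ cos (ψ / 2) := by
    rw [← cos_pi_div_three]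
    exact cos_le_cos_of_nonneg_of_le_pi (by linarith) (by linarith) (by linarith)
  have hu : 0 < cos (ψ / 4) := cos_pos_of_mem_Ioo ⟨by linarith [pi_pos], by linarith [pi_pos]⟩
  have hu' : 3 / 4 < cos (ψ / 4) := by
    nlinarith [cos_half_eq_two_mul_cos_quarter_sq_sub_one ψ]
  rw [rDenom, cos_eq_two_mul_cos_half_sq_sub_one ψ]
  nlinarith

lemma pos_of_lt_isLeast_zero {f : ℝ → ℝ} {ω x : ℝ} (hf : Continuous f) (hf₀ : 0 < f 0)
    (hω : IsLeast {x | 0 < x ∧ f x = 0} ω) (hx₀ : 0 ≤ x) (hx : x < ω) : 0 < f x := by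
  by_contra! hfx
  obtain ⟨c, ⟨hc₀, hcx⟩, hfc⟩ :=
    intermediate_value_Icc' hx₀ hf.continuousOn ⟨hfx, hf₀.le⟩
  have hc : 0 < c := lt_of_le_of_ne hc₀ (by rintro rfl; exact hf₀.ne' hfc)
  linarith [hω.2 ⟨hc, hfc⟩]

section FirstZero

variable {ω : ℝ} (hω : IsLeast {ψ : ℝ | 0 < ψ ∧ rDenom ψ = 0} ω)
include hω

lemma le_two_pi_of_isLeast : ω ≤ 2 * π := hω.2 ⟨by positivity, rDenom_two_pi⟩

lemma two_pi_div_three_lt_of_isLeast : 2 * π / 3 < ω := by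
  by_contra! h
  exact (rDenom_pos_of_le hω.1.1.le h).ne' hω.1.2

lemma poleInner_eq_mul_of_lt_isLeast {ψ : ℝ} (h₀ : 0 < ψ) (h₁ : ψ < ω) :
    ∃ k > 0, poleInner ψ = k * (2 * cos (ψ / 2) - 1) := by
  have hω₂ := le_two_pi_of_isLeast hω
  have hc : 0 < cDenom ψ := cDenom_pos (by linarith) (by linarith)
  have hr : 0 < rDenom ψ :=
    pos_of_lt_isLeast_zero (by unfold rDenom; fun_prop) (by rw [rDenom_zero]; norm_num) hω
      h₀.le h₁
  have hv : 0 < 1 + cos (ψ / 2) := by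
    have : -1 < cos (ψ / 2) := by
      rw [← cos_pi]
      exact cos_lt_cos_of_nonneg_of_le_pi (by linarith) le_rfl (by linarith)
    linarith
  refine ⟨4 * (1 + cos (ψ / 2)) / (cDenom ψ * rDenom ψ), by positivity, ?_⟩
  rw [poleInner_eq ψ hc.ne' hr.ne']
  ring

end FirstZero

/-- The quantity 2 + c² − R², with c² = (1+cos ψ)/(2cos(ψ/4) − cos ψ + 1) and
R² = (1+cos ψ)/(2cos(ψ/4) + cos ψ − 1), is positive for ψ ∈ (0, 2π/3),
vanishes at ψ = 2π/3, and is negative for ψ ∈ (2π/3, ω), where ω is the smallest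
positive root of 2cos(ψ/4) + cos ψ − 1 = 0. -/
theorem stmt6 (ω : ℝ)
    (hω : IsLeast {ψ : ℝ | 0 < ψ ∧ 2 * Real.cos (ψ / 4) + Real.cos ψ - 1 = 0} ω) :
    (∀ ψ ∈ Set.Ioo 0 (2 * Real.pi / 3),
      0 < 2 + (1 + Real.cos ψ) / (2 * Real.cos (ψ / 4) - Real.cos ψ + 1) -
            (1 + Real.cos ψ) / (2 * Real.cos (ψ / 4) + Real.cos ψ - 1)) ∧
    (2 + (1 + Real.cos (2 * Real.pi / 3)) /
          (2 * Real.cos (2 * Real.pi / 3 / 4) - Real.cos (2 * Real.pi / 3) + 1) -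
        (1 + Real.cos (2 * Real.pi / 3)) /
          (2 * Real.cos (2 * Real.pi / 3 / 4) + Real.cos (2 * Real.pi / 3) - 1) = 0) ∧
    (∀ ψ ∈ Set.Ioo (2 * Real.pi / 3) ω,
      2 + (1 + Real.cos ψ) / (2 * Real.cos (ψ / 4) - Real.cos ψ + 1) -
          (1 + Real.cos ψ) / (2 * Real.cos (ψ / 4) + Real.cos ψ - 1) < 0) := by
  have hω₂ := le_two_pi_of_isLeast hω
  have hω₁ := two_pi_div_three_lt_of_isLeast hω
  refine ⟨fun ψ ⟨h₀, h₁⟩ => ?_, ?_, fun ψ ⟨h₀, h₁⟩ => ?_⟩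
  · obtain ⟨k, hk, hψ⟩ := poleInner_eq_mul_of_lt_isLeast hω h₀ (h₁.trans hω₁)
    have : 1 / 2 < cos (ψ / 2) := by
      rw [← cos_pi_div_three]
      exact cos_lt_cos_of_nonneg_of_le_pi (by linarith) (by linarith) (by linarith)
    change 0 < poleInner ψ
    rw [hψ]
    exact mul_pos hk (by linarith)
  · obtain ⟨k, -, hψ⟩ := poleInner_eq_mul_of_lt_isLeast hω (by positivity) hω₁
    change poleInner (2 * π / 3) = 0
    rw [hψ, show 2 * π / 3 / 2 = π / 3 by ring, cos_pi_div_three]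
    ring
  · obtain ⟨k, hk, hψ⟩ := poleInner_eq_mul_of_lt_isLeast hω (by linarith [pi_pos]) h₁
    have : cos (ψ / 2) < 1 / 2 := by
      rw [← cos_pi_div_three]
      exact cos_lt_cos_of_nonneg_of_le_pi (by positivity) (by linarith) (by linarith)
    change poleInner ψ < 0
    rw [hψ]
    exact mul_neg_of_pos_of_neg hk (by linarith)
end

section
/- Define f(ψ) = (1/2)·(R² − c²)·(2 + c² − R²) with c², R² as the functions c² = (1+cos ψ)/(2cos(ψ/4) − cos ψ + 1), R² = (1+cos ψ)/(2cos(ψ/4) + cos ψ − 1). Then f(ψ) > 0 for ψ ∈ (0, 2π/3) and f(0) = f(2π/3) = 0. -/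
/-- f(ψ) = (1/2)(R² − c²)(2 + c² − R²), with c² = (1+cos ψ)/(2cos(ψ/4) − cos ψ + 1)
and R² = (1+cos ψ)/(2cos(ψ/4) + cos ψ − 1), is positive on (0, 2π/3) and
vanishes at ψ = 0 and ψ = 2π/3. -/
theorem stmt8 (f : ℝ → ℝ)
    (hf : ∀ ψ, f ψ =
      (1 / 2) * ((1 + Real.cos ψ) / (2 * Real.cos (ψ / 4) + Real.cos ψ - 1) -
          (1 + Real.cos ψ) / (2 * Real.cos (ψ / 4) - Real.cos ψ + 1)) *
        (2 + (1 + Real.cos ψ) / (2 * Real.cos (ψ / 4) - Real.cos ψ + 1) -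
          (1 + Real.cos ψ) / (2 * Real.cos (ψ / 4) + Real.cos ψ - 1))) :
    (∀ ψ ∈ Set.Ioo 0 (2 * Real.pi / 3), 0 < f ψ) ∧ f 0 = 0 ∧ f (2 * Real.pi / 3) = 0 := by
  have hπ := Real.pi_pos
  have hs3 : Real.sqrt 3 ^ 2 = 3 := Real.sq_sqrt (by norm_num)
  have hs3' : (1.7 : ℝ) < Real.sqrt 3 := by
    nlinarith [Real.sqrt_nonneg 3]
  have hc23 : Real.cos (2 * Real.pi / 3) = -(1/2) := by
    have h : 2 * Real.pi / 3 = Real.pi - Real.pi / 3 := by ring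
    rw [h, Real.cos_pi_sub, Real.cos_pi_div_three]
  refine ⟨?_, ?_, ?_⟩
  · intro ψ hψ
    obtain ⟨hψ0, hψ1⟩ := hψ
    set a := Real.cos (ψ / 4) with ha
    set c := Real.cos ψ with hc
    have hca : Real.sqrt 3 / 2 < a := by
      have h1 : ψ / 4 < Real.pi / 6 := by linarith
      have := Real.cos_lt_cos_of_nonneg_of_le_pi (by linarith) (by linarith) h1
      rwa [Real.cos_pi_div_six] at this
    have hc1 : c < 1 := by
      have := Real.cos_lt_cos_of_nonneg_of_le_pi (le_refl 0) (by linarith) hψ0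
      rwa [Real.cos_zero] at this
    have hc2 : -(1/2 : ℝ) < c := by
      have := Real.cos_lt_cos_of_nonneg_of_le_pi hψ0.le (by linarith) hψ1
      rwa [hc23] at this
    have hkey : 0 < 2 * a ^ 2 - 1 + c := by
      have e : Real.cos (2 * (ψ / 4)) = 2 * a ^ 2 - 1 := by
        have := Real.cos_sq (ψ / 4)
        linarith
      have h1 : Real.cos (Real.pi / 3) < Real.cos (2 * (ψ / 4)) := by
        apply Real.cos_lt_cos_of_nonneg_of_le_pi (by linarith) (by linarith) (by linarith)
      rw [Real.cos_pi_div_three, e] at h1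
      linarith
    have hD1 : 0 < 2 * a + c - 1 := by nlinarith
    have hD2 : 0 < 2 * a - c + 1 := by nlinarith
    have hc0 : 0 < 1 + c := by linarith
    rw [hf]
    set x := (1 + c) / (2 * a + c - 1) with hx
    set y := (1 + c) / (2 * a - c + 1) with hy
    have hxy : y < x := div_lt_div_of_pos_left hc0 hD1 (by linarith)
    have hxy2 : x - y < 2 := by
      have e : x - y = 2 * (1 - c ^ 2) / ((2 * a + c - 1) * (2 * a - c + 1)) := by
        rw [hx, hy]
        field_simp
        ring
      rw [e, div_lt_iff₀ (mul_pos hD1 hD2)]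
      nlinarith
    have := mul_pos (mul_pos (by norm_num : (0:ℝ) < 1/2) (sub_pos.mpr hxy))
      (by linarith : (0:ℝ) < 2 + y - x)
    linarith [this]
  · rw [hf]
    norm_num
  · have h4 : 2 * Real.pi / 3 / 4 = Real.pi / 6 := by ring
    rw [hf, h4, Real.cos_pi_div_six, hc23]
    have hd1 : 2 * (Real.sqrt 3 / 2) + -(1/2) - 1 ≠ 0 := by nlinarith
    have hd2 : 2 * (Real.sqrt 3 / 2) - -(1/2) + 1 ≠ 0 := by nlinarith
    have hB : (2 + (1 + -(1/2)) / (2 * (Real.sqrt 3 / 2) - -(1/2) + 1) -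
        (1 + -(1/2)) / (2 * (Real.sqrt 3 / 2) + -(1/2) - 1)) = 0 := by
      rw [show (2 * (Real.sqrt 3 / 2) - -(1/2) + 1 : ℝ) = Real.sqrt 3 + 3/2 by ring,
        show (2 * (Real.sqrt 3 / 2) + -(1/2) - 1 : ℝ) = Real.sqrt 3 - 3/2 by ring,
        show ((1 : ℝ) + -(1/2)) = 1/2 by ring]
      have hd1' : Real.sqrt 3 - 3/2 ≠ 0 := by nlinarith
      have hd2' : Real.sqrt 3 + 3/2 ≠ 0 := by nlinarith
      have e1 : (1/2 : ℝ) / (Real.sqrt 3 + 3/2) = (2/3) * Real.sqrt 3 - 1 := by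
        rw [div_eq_iff hd2']
        linear_combination (-(2/3) : ℝ) * hs3
      have e2 : (1/2 : ℝ) / (Real.sqrt 3 - 3/2) = (2/3) * Real.sqrt 3 + 1 := by
        rw [div_eq_iff hd1']
        linear_combination (-(2/3) : ℝ) * hs3
      rw [e1, e2]
      ring
    rw [hB, mul_zero]
end

section
/- Define g(ψ) = (R² − 1)·(2 + c² − R²)/(c² + 1) with c² = (1+cos ψ)/(2cos(ψ/4) − cos ψ + 1) and R² = (1+cos ψ)/(2cos(ψ/4) + cos ψ − 1). Then g(ψ) > 0 for ψ ∈ (0, 2π/3) and g(0) = g(2π/3) = 0. -/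
/-!
Writing `u = cos (ψ / 4)`, we have `cos ψ = 8u⁴ - 8u² + 1`, and with this substitution `g`
collapses to `2(1 - u)(4u² - 3) / ((1 + u)(4u³ - 4u + 1)²)`. As `ψ` runs over `[0, 2π/3]`, `u`
decreases from `1` to `√3/2`, where the cubic `4u³ - 4u + 1` stays positive; so `g` vanishes
exactly at the endpoints `u = 1` and `4u² = 3`, and is positive in between.
-/

open Real Set

/-- `(R² - 1)(2 + c² - R²)/(c² + 1)` written in `x = cos ψ` and `u = cos (ψ / 4)`. -/
noncomputable def vertexGap (x u : ℝ) : ℝ :=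
  ((1 + x) / (2 * u + x - 1) - 1) * (2 + (1 + x) / (2 * u - x + 1) - (1 + x) / (2 * u + x - 1)) /
    ((1 + x) / (2 * u - x + 1) + 1)

lemma cos_eq_of_cos_div_four (ψ : ℝ) :
    cos ψ = 8 * cos (ψ / 4) ^ 4 - 8 * cos (ψ / 4) ^ 2 + 1 := by
  conv_lhs => rw [show ψ = 2 * (2 * (ψ / 4)) by ring]
  rw [cos_two_mul, cos_two_mul]
  ring

lemma cos_div_four_mem_Icc {ψ : ℝ} (hψ : ψ ∈ Icc 0 (2 * π / 3)) :
    cos (ψ / 4) ∈ Icc (√3 / 2) 1 := by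
  have hq : ψ / 4 ∈ Icc 0 (π / 6) := ⟨by linarith [hψ.1], by linarith [hψ.2]⟩
  have hπ := pi_pos
  constructor
  · rw [← cos_pi_div_six]
    exact cos_le_cos_of_nonneg_of_le_pi hq.1 (by linarith) hq.2
  · exact cos_le_one _

lemma cos_div_four_mem_Ioo {ψ : ℝ} (hψ : ψ ∈ Ioo 0 (2 * π / 3)) :
    cos (ψ / 4) ∈ Ioo (√3 / 2) 1 := by
  have hq : ψ / 4 ∈ Ioo 0 (π / 6) := ⟨by linarith [hψ.1], by linarith [hψ.2]⟩
  have hπ := pi_pos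
  constructor
  · rw [← cos_pi_div_six]
    exact cos_lt_cos_of_nonneg_of_le_pi hq.1.le (by linarith) hq.2
  · rw [← cos_zero]
    exact cos_lt_cos_of_nonneg_of_le_pi le_rfl (by linarith [hq.2]) hq.1

lemma cubic_pos_of_mem_Icc {u : ℝ} (hu : u ∈ Icc (√3 / 2) 1) :
    0 < 4 * u ^ 3 - 4 * u + 1 ∧ 0 < 1 + 4 * u - 4 * u ^ 3 := by
  have hs : √3 ^ 2 = 3 := sq_sqrt (by norm_num)
  have hs' : (1.7 : ℝ) < √3 := by nlinarith [sqrt_nonneg 3]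
  obtain ⟨h1, h2⟩ := hu
  constructor <;>
    nlinarith [sq_nonneg (2 * u - √3), mul_nonneg (sub_nonneg.2 h1) (sub_nonneg.2 h2)]

noncomputable def reducedVertexGap (u : ℝ) : ℝ :=
  2 * (1 - u) * (4 * u ^ 2 - 3) / ((1 + u) * (4 * u ^ 3 - 4 * u + 1) ^ 2)

lemma vertexGap_eq_reducedVertexGap {u : ℝ} (hu : u ≠ 0) (hu1 : 1 + u ≠ 0)
    (hA : 1 + 4 * u - 4 * u ^ 3 ≠ 0) (hB : 4 * u ^ 3 - 4 * u + 1 ≠ 0) :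
    vertexGap (8 * u ^ 4 - 8 * u ^ 2 + 1) u = reducedVertexGap u := by
  have h2u : (2 : ℝ) * u ≠ 0 := by positivity
  have hplus : 2 * u + (8 * u ^ 4 - 8 * u ^ 2 + 1) - 1 = 2 * u * (4 * u ^ 3 - 4 * u + 1) := by ring
  have hminus : 2 * u - (8 * u ^ 4 - 8 * u ^ 2 + 1) + 1 = 2 * u * (1 + 4 * u - 4 * u ^ 3) := by ring
  have hsum : 1 + (8 * u ^ 4 - 8 * u ^ 2 + 1) = 2 * (2 * u ^ 2 - 1) ^ 2 := by ring
  have hRsq_sub_one : 2 * (2 * u ^ 2 - 1) ^ 2 / (2 * u * (4 * u ^ 3 - 4 * u + 1)) - 1 =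
      (1 - u) / (u * (4 * u ^ 3 - 4 * u + 1)) := by
    rw [div_sub_one (mul_ne_zero h2u hB), div_eq_div_iff (mul_ne_zero h2u hB) (mul_ne_zero hu hB)]
    ring
  have hcsq_add_one : 2 * (2 * u ^ 2 - 1) ^ 2 / (2 * u * (1 + 4 * u - 4 * u ^ 3)) + 1 =
      (1 + u) / (u * (1 + 4 * u - 4 * u ^ 3)) := by
    rw [div_add_one (mul_ne_zero h2u hA), div_eq_div_iff (mul_ne_zero h2u hA) (mul_ne_zero hu hA)]
    ring
  have htwo_add_csq_sub_Rsq : 2 + 2 * (2 * u ^ 2 - 1) ^ 2 / (2 * u * (1 + 4 * u - 4 * u ^ 3)) -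
      2 * (2 * u ^ 2 - 1) ^ 2 / (2 * u * (4 * u ^ 3 - 4 * u + 1)) =
      2 * (4 * u ^ 2 - 3) / ((1 + 4 * u - 4 * u ^ 3) * (4 * u ^ 3 - 4 * u + 1)) := by
    rw [add_div' _ _ _ (mul_ne_zero h2u hA),
      div_sub_div _ _ (mul_ne_zero h2u hA) (mul_ne_zero h2u hB),
      div_eq_div_iff (mul_ne_zero (mul_ne_zero h2u hA) (mul_ne_zero h2u hB)) (mul_ne_zero hA hB)]
    ring
  rw [vertexGap, reducedVertexGap, hplus, hminus, hsum, hRsq_sub_one, hcsq_add_one,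
    htwo_add_csq_sub_Rsq, div_mul_div_comm, div_div_div_eq,
    div_eq_div_iff (mul_ne_zero (mul_ne_zero (mul_ne_zero hu hB) (mul_ne_zero hA hB)) hu1)
      (mul_ne_zero hu1 (pow_ne_zero 2 hB))]
  ring

lemma vertexGap_cos_eq {ψ : ℝ} (hψ : ψ ∈ Icc 0 (2 * π / 3)) :
    vertexGap (cos ψ) (cos (ψ / 4)) = reducedVertexGap (cos (ψ / 4)) := by
  have hu := cos_div_four_mem_Icc hψ
  have hu0 : 0 < cos (ψ / 4) := lt_of_lt_of_le (by positivity) hu.1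
  obtain ⟨hB, hA⟩ := cubic_pos_of_mem_Icc hu
  rw [cos_eq_of_cos_div_four ψ]
  exact vertexGap_eq_reducedVertexGap hu0.ne' (by positivity) hA.ne' hB.ne'

lemma reducedVertexGap_pos {u : ℝ} (hu : u ∈ Ioo (√3 / 2) 1) : 0 < reducedVertexGap u := by
  have hB := (cubic_pos_of_mem_Icc (Ioo_subset_Icc_self hu)).1
  obtain ⟨h1, h2⟩ := hu
  have hu0 : 0 < u := lt_trans (by positivity) h1
  have hsq : 0 < 4 * u ^ 2 - 3 := by
    nlinarith [mul_self_lt_mul_self (by positivity) h1, sq_sqrt (show (0 : ℝ) ≤ 3 by norm_num)]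
  have h1u := sub_pos.2 h2
  unfold reducedVertexGap
  positivity

lemma reducedVertexGap_one : reducedVertexGap 1 = 0 := by
  norm_num [reducedVertexGap]

lemma reducedVertexGap_sqrt_three_div_two : reducedVertexGap (√3 / 2) = 0 := by
  have hs : 4 * (√3 / 2) ^ 2 - 3 = 0 := by
    rw [div_pow, sq_sqrt (by norm_num)]
    norm_num
  rw [reducedVertexGap, hs, mul_zero, zero_div]

/-- g(ψ) = (R² − 1)(2 + c² − R²)/(c² + 1), with c² = (1+cos ψ)/(2cos(ψ/4) − cos ψ + 1)
and R² = (1+cos ψ)/(2cos(ψ/4) + cos ψ − 1), is positive on (0, 2π/3) and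
vanishes at ψ = 0 and ψ = 2π/3. -/
theorem stmt9 (g : ℝ → ℝ)
    (hg : ∀ ψ, g ψ =
      ((1 + Real.cos ψ) / (2 * Real.cos (ψ / 4) + Real.cos ψ - 1) - 1) *
        (2 + (1 + Real.cos ψ) / (2 * Real.cos (ψ / 4) - Real.cos ψ + 1) -
          (1 + Real.cos ψ) / (2 * Real.cos (ψ / 4) + Real.cos ψ - 1)) /
        ((1 + Real.cos ψ) / (2 * Real.cos (ψ / 4) - Real.cos ψ + 1) + 1)) :
    (∀ ψ ∈ Set.Ioo 0 (2 * Real.pi / 3), 0 < g ψ) ∧ g 0 = 0 ∧ g (2 * Real.pi / 3) = 0 := by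
  have hred : ∀ ψ ∈ Icc 0 (2 * π / 3), g ψ = reducedVertexGap (cos (ψ / 4)) :=
    fun ψ hψ => (hg ψ).trans (vertexGap_cos_eq hψ)
  have hπ := pi_pos
  refine ⟨fun ψ hψ => ?_, ?_, ?_⟩
  · rw [hred ψ (Ioo_subset_Icc_self hψ)]
    exact reducedVertexGap_pos (cos_div_four_mem_Ioo hψ)
  · rw [hred 0 ⟨le_rfl, by positivity⟩, zero_div, cos_zero, reducedVertexGap_one]
  · rw [hred _ ⟨by positivity, le_rfl⟩, show 2 * π / 3 / 4 = π / 6 by ring, cos_pi_div_six,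
      reducedVertexGap_sqrt_three_div_two]
end

section
/- For ψ strictly between ω and π, the quantity −(1 + cos ψ)/(2·cos(ψ/4) − 1 + cos ψ) is strictly positive, where ω = 4·arccos((2/√3)·cos((1/3)·arccos(−3√3/8))). -/
/-!
With `x = cos (ψ / 4)` the double-angle formula gives `1 + cos ψ = 2 cos² (ψ / 2) > 0` and
`2x - 1 + cos ψ = 2x (4x³ - 4x + 1)`. By Viète's trigonometric formula `c = cos (ω / 4)` is a root
of `4t³ - 4t + 1`, so the cubic equals `(x - c) (4 (x² + xc + c²) - 4)` at `x`. For `ω < ψ < π`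
we have `0 < x < c` and `2x² - 1 = cos (ψ / 2) > 0`, hence `x² + xc + c² > 3x² > 1`: the cubic,
and with it the denominator, is negative, like the numerator.
-/

open Real

theorem cos_arccos_div_three_triple {a : ℝ} (ha₁ : -1 ≤ a) (ha₂ : a ≤ 1) :
    4 * cos (arccos a / 3) ^ 3 - 3 * cos (arccos a / 3) = a := by
  rw [← cos_three_mul, mul_div_cancel₀ _ three_ne_zero, cos_arccos ha₁ ha₂]

theorem cubic_viete_root {p q : ℝ} (hp : p < 0)
    (h₁ : -1 ≤ 3 * q / (2 * p) * √(-3 / p)) (h₂ : 3 * q / (2 * p) * √(-3 / p) ≤ 1) :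
    (2 * √(-p / 3) * cos (arccos (3 * q / (2 * p) * √(-3 / p)) / 3)) ^ 3
      + p * (2 * √(-p / 3) * cos (arccos (3 * q / (2 * p) * √(-3 / p)) / 3)) + q = 0 := by
  have hu := cos_arccos_div_three_triple h₁ h₂
  set u := cos (arccos (3 * q / (2 * p) * √(-3 / p)) / 3)
  have hr : √(-3 / p) = (√(-p / 3))⁻¹ := by
    rw [← sqrt_inv, inv_div, neg_div, div_neg]
  rw [hr] at hu
  set r := √(-p / 3)
  have hr0 : r ≠ 0 := (sqrt_pos.2 (by linarith)).ne'
  have hr2 : r ^ 2 = -p / 3 := sq_sqrt (by linarith)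
  have hq : 3 * q / (2 * p) * r⁻¹ * (2 * r ^ 3) = -q := by
    field_simp [hp.ne]
    linear_combination (3 * q) * hr2
  linear_combination (2 * r ^ 3) * hu + hq + (6 * r * u) * hr2

theorem cubic_neg_of_lt_root {c x : ℝ} (hc : 4 * c ^ 3 - 4 * c + 1 = 0)
    (hx₀ : 0 < x) (hx : 1 / 2 < x ^ 2) (hxc : x < c) : 4 * x ^ 3 - 4 * x + 1 < 0 := by
  have hquad : 0 < 4 * (x ^ 2 + x * c + c ^ 2) - 4 := by nlinarith
  calc 4 * x ^ 3 - 4 * x + 1 = (x - c) * (4 * (x ^ 2 + x * c + c ^ 2) - 4) := by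
        linear_combination hc
    _ < 0 := mul_neg_of_neg_of_pos (by linarith) hquad

/-- `cos (ω / 4)`: Viète's formula for the largest root of `t³ + p t + q` at `p = -1`, `q = 1/4`. -/
noncomputable def cosQuarterOmega : ℝ :=
  (2 / √3) * cos ((1 / 3) * arccos (-3 * √3 / 8))

theorem cosQuarterOmega_cubic :
    4 * cosQuarterOmega ^ 3 - 4 * cosQuarterOmega + 1 = 0 := by
  have hs : √3 < 8 / 3 := by
    rw [sqrt_lt' (by norm_num)]; norm_num
  have h := cubic_viete_root (p := -1) (q := 1 / 4) (by norm_num)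
    (by norm_num; linarith) (by norm_num; linarith [sqrt_nonneg 3])
  have hc : 2 * √(-(-1) / 3) * cos (arccos (3 * (1 / 4) / (2 * (-1)) * √(-3 / (-1))) / 3)
      = cosQuarterOmega := by
    rw [cosQuarterOmega]; norm_num; ring_nf
  rw [hc] at h
  linear_combination 4 * h

theorem cosQuarterOmega_nonneg : 0 ≤ cosQuarterOmega := by
  have := arccos_le_pi (-3 * √3 / 8)
  have := arccos_nonneg (-3 * √3 / 8)
  have := pi_pos
  exact mul_nonneg (by positivity) (cos_nonneg_of_mem_Icc ⟨by linarith, by linarith⟩)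

theorem cosQuarterOmega_le_one : cosQuarterOmega ≤ 1 := by
  by_contra! h
  have : 0 < cosQuarterOmega * (cosQuarterOmega - 1) * (cosQuarterOmega + 1) := by
    apply mul_pos (mul_pos _ _) _ <;> linarith
  linarith [cosQuarterOmega_cubic]

/-- For ψ strictly between ω = 4·arccos((2/√3)·cos((1/3)·arccos(−3√3/8))) and π,
the spherical square radius −(1 + cos ψ)/(2·cos(ψ/4) − 1 + cos ψ) is strictly positive. -/
theorem stmt11 (ψ : ℝ)
    (hψ : ψ ∈ Set.Ioo
      (4 * Real.arccos ((2 / Real.sqrt 3) *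
        Real.cos ((1 / 3) * Real.arccos (-3 * Real.sqrt 3 / 8))))
      Real.pi) :
    0 < -(1 + Real.cos ψ) / (2 * Real.cos (ψ / 4) - 1 + Real.cos ψ) := by
  obtain ⟨hlo, hhi⟩ : 4 * arccos cosQuarterOmega < ψ ∧ ψ < π := hψ
  have hc₀ := cosQuarterOmega_nonneg
  have hψ₀ : 0 < ψ := by linarith [arccos_nonneg cosQuarterOmega]
  set x := cos (ψ / 4)
  have hxc : x < cosQuarterOmega := by
    simpa [cos_arccos (by linarith : (-1 : ℝ) ≤ _) cosQuarterOmega_le_one] using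
      cos_lt_cos_of_nonneg_of_le_pi (x := arccos cosQuarterOmega) (y := ψ / 4) (arccos_nonneg _)
        (by linarith) (by linarith)
  have hx₀ : 0 < x := cos_pos_of_mem_Ioo ⟨by linarith, by linarith⟩
  have hhalf : 0 < cos (ψ / 2) := cos_pos_of_mem_Ioo ⟨by linarith, by linarith⟩
  have hhalf_eq : cos (ψ / 2) = 2 * x ^ 2 - 1 := by rw [← cos_two_mul]; ring_nf
  have hcos : cos ψ = 2 * cos (ψ / 2) ^ 2 - 1 := by rw [← cos_two_mul]; ring_nf
  have hnum : 0 < 1 + cos ψ := by rw [hcos]; linarith [pow_pos hhalf 2]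
  have hden : 2 * x - 1 + cos ψ < 0 :=
    calc 2 * x - 1 + cos ψ = 2 * x * (4 * x ^ 3 - 4 * x + 1) := by
          rw [hcos, hhalf_eq]; ring
      _ < 0 := mul_neg_of_pos_of_neg (by positivity)
          (cubic_neg_of_lt_root cosQuarterOmega_cubic hx₀ (by linarith) hxc)
  exact div_pos_of_neg_of_neg (neg_neg_of_pos hnum) hden
end

section
/- Let ζ = 4·arccos((2/√3)·cos((1/3)·arccos(−3√3/8) + 4π/3)). Then ζ satisfies 2·cos(ζ/4) + cos ζ − 1 = 0 and ζ > ω, where ω is the smallest positive root of the same equation. -/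
private lemma stmt13_aux : 1 / Real.sqrt 3 < Real.sqrt 2 / 2 := by
  have hs3pos : (0:ℝ) < Real.sqrt 3 := Real.sqrt_pos.mpr (by norm_num)
  rw [div_lt_div_iff₀ hs3pos (by norm_num)]
  nlinarith [Real.sq_sqrt (show (0:ℝ) ≤ 2 by norm_num), Real.sqrt_nonneg 2,
    Real.sq_sqrt (show (0:ℝ) ≤ 3 by norm_num), Real.sqrt_nonneg 3,
    sq_nonneg (Real.sqrt 2 * Real.sqrt 3 - 2)]

private lemma stmt13_aux2 : Real.sqrt 2 < 2 := by
  nlinarith [Real.sq_sqrt (show (0:ℝ) ≤ 2 by norm_num), Real.sqrt_nonneg 2]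

/-- ζ = 4·arccos((2/√3)·cos((1/3)·arccos(−3√3/8) + 4π/3)) satisfies
2·cos(ζ/4) + cos ζ − 1 = 0 and ζ > ω, where ω is the smallest positive root of the
same equation. -/
theorem stmt13 (ω ζ : ℝ)
    (hζ : ζ = 4 * Real.arccos ((2 / Real.sqrt 3) *
      Real.cos ((1 / 3) * Real.arccos (-3 * Real.sqrt 3 / 8) + 4 * Real.pi / 3)))
    (hω : IsLeast {ψ : ℝ | 0 < ψ ∧ 2 * Real.cos (ψ / 4) + Real.cos ψ - 1 = 0} ω) :
    2 * Real.cos (ζ / 4) + Real.cos ζ - 1 = 0 ∧ ω < ζ := by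
  have pi_pos := Real.pi_pos
  have hs3 : Real.sqrt 3 ^ 2 = 3 := Real.sq_sqrt (by norm_num)
  have hs3pos : (0:ℝ) < Real.sqrt 3 := Real.sqrt_pos.mpr (by norm_num)
  have hs3lt : Real.sqrt 3 < 2 := by
    nlinarith [hs3, hs3pos]
  set a := Real.arccos (-3 * Real.sqrt 3 / 8) with ha
  -- bounds on a : π/2 < a < π
  have harg1 : (-1:ℝ) < -3 * Real.sqrt 3 / 8 := by nlinarith
  have harg2 : -3 * Real.sqrt 3 / 8 < 0 := by nlinarith
  have ha2 : Real.pi / 2 < a := by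
    by_contra h
    push_neg at h
    exact absurd (Real.arccos_le_pi_div_two.mp h) (by nlinarith)
  have ha3 : a < Real.pi := by
    rcases lt_or_eq_of_le (Real.arccos_le_pi (-3 * Real.sqrt 3 / 8)) with h | h
    · exact h
    · exact absurd (Real.arccos_eq_pi.mp h) (by nlinarith)
  have hcosa : Real.cos a = -3 * Real.sqrt 3 / 8 :=
    Real.cos_arccos (le_of_lt harg1) (by nlinarith)
  set φ := (1 / 3) * a + 4 * Real.pi / 3 with hφ
  set α := (1 / 3) * a - Real.pi / 6 with hα
  have hαpos : 0 < α := by rw [hα]; linarith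
  have hαlt : α < Real.pi / 6 := by rw [hα]; linarith
  -- cos φ = sin α
  have hcosφ : Real.cos φ = Real.sin α := by
    have : φ = (α + Real.pi / 2) + Real.pi := by rw [hφ, hα]; ring
    rw [this, Real.cos_add_pi, Real.cos_add_pi_div_two, neg_neg]
  have hsinlt : Real.sin α < 1 / 2 := by
    have := Real.strictMonoOn_sin
      (Set.mem_Icc.mpr ⟨by linarith, by linarith⟩)
      (Set.mem_Icc.mpr ⟨by linarith, by linarith⟩) hαlt
    rwa [Real.sin_pi_div_six] at this
  have hsinpos : 0 < Real.sin α := by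
    have h6 : Real.pi / 6 < Real.pi := by linarith
    exact Real.sin_pos_of_pos_of_lt_pi hαpos (hαlt.trans h6)
  set x := (2 / Real.sqrt 3) * Real.cos φ with hx
  clear_value x α φ a
  have hxpos : 0 < x := by
    rw [hx, hcosφ]; positivity
  have hxlt : x < 1 / Real.sqrt 3 := by
    rw [hx, hcosφ, div_mul_eq_mul_div, div_lt_div_iff₀ hs3pos hs3pos]
    nlinarith
  have hxlt1 : x < 1 := by
    have : 1 / Real.sqrt 3 < 1 := by
      rw [div_lt_one hs3pos]; nlinarith
    linarith
  have hxlt2 : x < Real.sqrt 2 / 2 := lt_trans hxlt stmt13_aux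
  -- the cubic equation 4x³ - 4x + 1 = 0
  have h3φ : Real.cos (3 * φ) = -3 * Real.sqrt 3 / 8 := by
    have : 3 * φ = (a + 2 * Real.pi) + 2 * Real.pi := by rw [hφ]; ring
    rw [this, Real.cos_add_two_pi, Real.cos_add_two_pi, hcosa]
  have hmul : Real.sqrt 3 * x = 2 * Real.cos φ := by
    rw [hx]; field_simp
  have hcubic : 4 * x ^ 3 - 4 * x + 1 = 0 := by
    have h3 := Real.cos_three_mul φ
    rw [h3φ] at h3
    have h9 : 3 * Real.sqrt 3 * (4 * x ^ 3 - 4 * x + 1) = 0 := by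
      linear_combination -8 * h3 +
        (4 * (Real.sqrt 3 ^ 2 * x ^ 2 + 2 * Real.sqrt 3 * x * Real.cos φ +
          4 * Real.cos φ ^ 2) - 12) * hmul + (-4 * Real.sqrt 3 * x ^ 3) * hs3
    exact (mul_eq_zero.mp h9).resolve_left (by positivity)
  -- cos(ζ/4) = x and cos ζ = 8x⁴ - 8x² + 1
  have hζ4 : ζ / 4 = Real.arccos x := by rw [hζ]; ring
  have hcosζ4 : Real.cos (ζ / 4) = x := by
    rw [hζ4]; exact Real.cos_arccos (by linarith) (le_of_lt hxlt1)
  have hcosζ : Real.cos ζ = 8 * x ^ 4 - 8 * x ^ 2 + 1 := by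
    have hζ2 : ζ = 2 * (2 * (ζ / 4)) := by ring
    rw [hζ2, Real.cos_two_mul, Real.cos_two_mul, hcosζ4]
    ring
  have heq : 2 * Real.cos (ζ / 4) + Real.cos ζ - 1 = 0 := by
    rw [hcosζ4, hcosζ]
    linear_combination 2 * x * hcubic
  refine ⟨heq, ?_⟩
  -- ζ > π
  have hζgtπ : Real.pi < ζ := by
    have h4 : Real.pi / 4 < Real.arccos x := by
      by_contra h
      push_neg at h
      have := Real.arccos_le_pi_div_four.mp h
      linarith
    rw [hζ]; linarith
  -- a root ψ₀ in (0, π] by IVT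
  set f : ℝ → ℝ := fun ψ => 2 * Real.cos (ψ / 4) + Real.cos ψ - 1 with hf
  have hcont : ContinuousOn f (Set.Icc 0 Real.pi) := by
    apply Continuous.continuousOn
    fun_prop
  have hf0 : f 0 = 2 := by simp [hf]
  have hfπ : f Real.pi < 0 := by
    have h2 : Real.sqrt 2 < 2 := stmt13_aux2
    simp only [hf]
    rw [Real.cos_pi_div_four, Real.cos_pi]
    linarith
  have hsub := intermediate_value_Icc' (le_of_lt pi_pos) hcont
  have h0mem : (0:ℝ) ∈ Set.Icc (f Real.pi) (f 0) := ⟨le_of_lt hfπ, by rw [hf0]; norm_num⟩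
  obtain ⟨ψ₀, hψ₀mem, hψ₀⟩ := hsub h0mem
  have hψ₀pos : 0 < ψ₀ := by
    rcases lt_or_eq_of_le hψ₀mem.1 with h | h
    · exact h
    · rw [← h] at hψ₀; rw [hf0] at hψ₀; norm_num at hψ₀
  have : ω ≤ ψ₀ := hω.2 ⟨hψ₀pos, hψ₀⟩
  calc ω ≤ ψ₀ := this
    _ ≤ Real.pi := hψ₀mem.2
    _ < ζ := hζgtπ
end

section
/- For ψ ∈ (0, 2π/3), with box dimensions a = b = 1 and c as above, the planes A: cx + cy + z = c and C: −cx − cy + z = c with hyperbolic poles (cR, cR, R, c) and (−cR, −cR, R, c) satisfy cos ψ = −⟨v_A, v_C⟩_H/(√⟨v_A,v_A⟩_H · √⟨v_C,v_C⟩_H), where ⟨v,w⟩_H = v₁w₁ + v₂w₂ + v₃w₃ − v₄w₄, provided c² = (1+cos ψ)/(2cos(ψ/4) − cos ψ + 1) and R² = (1+cos ψ)/(2cos(ψ/4) + cos ψ − 1). -/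
/-- Hyperbolic bilinear form ⟨v,w⟩_H = v₁w₁ + v₂w₂ + v₃w₃ − v₄w₄ on ℝ⁴. -/
def hypForm (v w : Fin 4 → ℝ) : ℝ := v 0 * w 0 + v 1 * w 1 + v 2 * w 2 - v 3 * w 3

/-- For ψ ∈ (0, 2π/3), with c² = (1+cos ψ)/(2cos(ψ/4) − cos ψ + 1) and
R² = (1+cos ψ)/(2cos(ψ/4) + cos ψ − 1), the poles v_A = (cR, cR, R, c) and
v_C = (−cR, −cR, R, c) of the planes A and C satisfy
cos ψ = −⟨v_A, v_C⟩_H/(√⟨v_A,v_A⟩_H · √⟨v_C,v_C⟩_H). -/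
theorem stmt16 (ψ c R : ℝ) (hψ : ψ ∈ Set.Ioo 0 (2 * Real.pi / 3))
    (hc : c ^ 2 = (1 + Real.cos ψ) / (2 * Real.cos (ψ / 4) - Real.cos ψ + 1))
    (hR : R ^ 2 = (1 + Real.cos ψ) / (2 * Real.cos (ψ / 4) + Real.cos ψ - 1))
    (vA vC : Fin 4 → ℝ)
    (hvA : vA = ![c * R, c * R, R, c]) (hvC : vC = ![-(c * R), -(c * R), R, c]) :
    Real.cos ψ = -(hypForm vA vC) /
      (Real.sqrt (hypForm vA vA) * Real.sqrt (hypForm vC vC)) := by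
  obtain ⟨h0, h1⟩ := hψ
  have hπ : (3:ℝ) < Real.pi := Real.pi_gt_three
  set k := Real.cos ψ with hk
  set u := Real.cos (ψ / 4) with hu
  -- basic bounds
  have hk1 : k < 1 := by
    have := Real.cos_lt_cos_of_nonneg_of_le_pi (le_refl 0) (by linarith : ψ ≤ Real.pi) h0
    rwa [Real.cos_zero] at this
  have hkhalf : -(1/2 : ℝ) < k := by
    have hle : 2 * Real.pi / 3 ≤ Real.pi := by linarith
    have := Real.cos_lt_cos_of_nonneg_of_le_pi (le_of_lt h0) hle h1
    have hval : Real.cos (2 * Real.pi / 3) = -(1/2) := by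
      have : (2 : ℝ) * Real.pi / 3 = Real.pi - Real.pi / 3 := by ring
      rw [this, Real.cos_pi_sub, Real.cos_pi_div_three]
    rw [hval] at this
    exact this
  have hsqrt3 : (1.7 : ℝ) < Real.sqrt 3 := by
    rw [show (1.7:ℝ) = Real.sqrt (1.7^2) by
      rw [Real.sqrt_sq]; norm_num]
    apply Real.sqrt_lt_sqrt (by positivity)
    norm_num
  have hu32 : Real.sqrt 3 / 2 < u := by
    have hlt : ψ / 4 < Real.pi / 6 := by linarith
    have := Real.cos_lt_cos_of_nonneg_of_le_pi (by positivity)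
      (by linarith) hlt
    rwa [Real.cos_pi_div_six] at this
  have hd1 : 0 < 2 * u - k + 1 := by nlinarith
  have hd2 : 0 < 2 * u + k - 1 := by nlinarith
  have hd1' : (2 * u - k + 1) ≠ 0 := ne_of_gt hd1
  have hd2' : (2 * u + k - 1) ≠ 0 := ne_of_gt hd2
  -- compute the bilinear forms
  have hAA : hypForm vA vA = 2 * c^2 * R^2 + R^2 - c^2 := by
    simp [hypForm, hvA]; ring
  have hCC : hypForm vC vC = 2 * c^2 * R^2 + R^2 - c^2 := by
    simp [hypForm, hvC]; ring
  have hAC : hypForm vA vC = -(2 * c^2 * R^2) + R^2 - c^2 := by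
    simp [hypForm, hvA, hvC]; ring
  -- positivity of the diagonal form
  have hRc : c^2 < R^2 := by
    rw [hc, hR]
    apply div_lt_div_of_pos_left (by linarith) hd2 (by linarith)
  have hApos : 0 < 2 * c^2 * R^2 + R^2 - c^2 := by nlinarith [sq_nonneg (c*R)]
  rw [hAA, hCC, hAC, Real.mul_self_sqrt hApos.le]
  rw [eq_div_iff (ne_of_gt hApos)]
  rw [hc, hR]
  field_simp
  ring
end
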